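/- With f₀ as above (a = (√5+1)/2, b = (√5-1)/2), one has 0 ≤ f₀'''(x) ≤ 2 for all x ∈ [−1,0]. -/

import Mathlib

noncomputable def aK : ℝ := (Real.sqrt 5 + 1) / 2
noncomputable def bK : ℝ := (Real.sqrt 5 - 1) / 2

noncomputable def f₀ : ℝ → ℝ := fun x =>
  1 / (Real.sqrt aK * (aK + bK)) * Real.sinh (Real.sqrt aK * x)
    - 1 / (Real.sqrt bK * (aK + bK)) * Real.sin (Real.sqrt bK * x)

noncomputable def g₀ : ℝ → ℝ := fun x =>
  1 / (aK * (aK + bK)) * Real.cosh (Real.sqrt aK * x)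
    + 1 / (bK * (aK + bK)) * Real.cos (Real.sqrt bK * x)
    - 1 / (aK * (aK + bK)) - 1 / (bK * (aK + bK))

/-!
Here `f₀''' x = (a cosh (√a x) + b cos (√b x)) / (a + b)` with `a - b = 1`, so
`a cosh (√a x) ≥ a > b ≥ -b cos (√b x)` makes it positive on all of `ℝ`. For `|x| ≤ 1`,
`cosh (√a x) ≤ exp (a x² / 2) ≤ exp (a / 2) < 2.3`, and `2.3 a + b ≤ 2 (a + b)` because `b > 1/2`.
-/

open Real

lemma iteratedDeriv_three_sinh_comp_mul (k x : ℝ) :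
    iteratedDeriv 3 (fun x => sinh (k * x)) x = k ^ 3 * cosh (k * x) := by
  rw [iteratedDeriv_comp_const_mul contDiff_sinh]
  simp

lemma iteratedDeriv_three_sin_comp_mul (k x : ℝ) :
    iteratedDeriv 3 (fun x => sin (k * x)) x = -(k ^ 3 * cos (k * x)) := by
  rw [iteratedDeriv_comp_const_mul contDiff_sin]
  simp

lemma cosh_sqrt_mul_le_exp_half {c x : ℝ} (hc : 0 ≤ c) (hx : |x| ≤ 1) :
    cosh (√c * x) ≤ exp (c / 2) :=
  calc cosh (√c * x) ≤ exp ((√c * x) ^ 2 / 2) := cosh_le_exp_half_sq _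
    _ = exp (c * x ^ 2 / 2) := by rw [mul_pow, sq_sqrt hc]
    _ ≤ exp (c / 2) := by
      gcongr
      nlinarith [sq_le_one_iff_abs_le_one x |>.2 hx]

lemma exp_lt_of_le_point_eighty_one {x : ℝ} (hx : x ≤ 0.81) : exp x < 2.3 :=
  calc exp x ≤ exp 0.81 := exp_le_exp.2 hx
    _ ≤ ∑ m ∈ Finset.range 4, (0.81 : ℝ) ^ m / m.factorial
          + 0.81 ^ 4 * (4 + 1) / (Nat.factorial 4 * 4) :=
      exp_bound' (by norm_num) (by norm_num) (by norm_num)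
    _ < 2.3 := by norm_num [Finset.sum_range_succ, Nat.factorial]

lemma two_lt_sqrt_five : 2 < √5 := (lt_sqrt (by norm_num)).2 (by norm_num)

lemma sqrt_five_lt : √5 < 2.24 := (sqrt_lt' (by norm_num)).2 (by norm_num)

lemma aK_sub_bK : aK - bK = 1 := by
  unfold aK bK
  ring

lemma half_lt_bK : 1 / 2 < bK := by
  unfold bK
  linarith [two_lt_sqrt_five]

lemma aK_lt : aK < 1.62 := by
  unfold aK
  linarith [sqrt_five_lt]

lemma bK_pos : 0 < bK := by linarith [half_lt_bK]

lemma aK_pos : 0 < aK := by linarith [aK_sub_bK, bK_pos]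

lemma iteratedDeriv_three_f₀ (x : ℝ) :
    iteratedDeriv 3 f₀ x = (aK * cosh (√aK * x) + bK * cos (√bK * x)) / (aK + bK) := by
  unfold f₀
  rw [iteratedDeriv_fun_sub (by fun_prop) (by fun_prop), iteratedDeriv_const_mul_field,
    iteratedDeriv_const_mul_field, iteratedDeriv_three_sinh_comp_mul,
    iteratedDeriv_three_sin_comp_mul]
  have ha : √aK ^ 3 = aK * √aK := by rw [pow_succ, sq_sqrt aK_pos.le]
  have hb : √bK ^ 3 = bK * √bK := by rw [pow_succ, sq_sqrt bK_pos.le]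
  have := (sqrt_pos.2 aK_pos).ne'
  have := (sqrt_pos.2 bK_pos).ne'
  rw [ha, hb]
  field_simp
  ring

lemma f₀_third_deriv_nonneg (x : ℝ) : 0 ≤ iteratedDeriv 3 f₀ x := by
  rw [iteratedDeriv_three_f₀]
  have hcosh : aK ≤ aK * cosh (√aK * x) := le_mul_of_one_le_right aK_pos.le (one_le_cosh _)
  have hcos : -bK ≤ bK * cos (√bK * x) := by nlinarith [neg_one_le_cos (√bK * x), bK_pos]
  have hnum : 0 ≤ aK * cosh (√aK * x) + bK * cos (√bK * x) := by linarith [aK_sub_bK]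
  exact div_nonneg hnum (add_pos aK_pos bK_pos).le

lemma f₀_third_deriv_le_two {x : ℝ} (hx : |x| ≤ 1) : iteratedDeriv 3 f₀ x ≤ 2 := by
  rw [iteratedDeriv_three_f₀, div_le_iff₀ (add_pos aK_pos bK_pos)]
  have hcosh : cosh (√aK * x) < 2.3 :=
    (cosh_sqrt_mul_le_exp_half aK_pos.le hx).trans_lt
      (exp_lt_of_le_point_eighty_one (by linarith [aK_lt]))
  have hcos : bK * cos (√bK * x) ≤ bK := mul_le_of_le_one_right bK_pos.le (cos_le_one _)
  nlinarith [aK_pos, aK_sub_bK, half_lt_bK]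

theorem f₀_third_deriv_bounds :
    ∀ x ∈ Set.Icc (-1 : ℝ) 0,
      0 ≤ iteratedDeriv 3 f₀ x ∧ iteratedDeriv 3 f₀ x ≤ 2 := by
  rintro x ⟨hx₁, hx₂⟩
  exact ⟨f₀_third_deriv_nonneg x, f₀_third_deriv_le_two (abs_le.2 ⟨hx₁, by linarith⟩)⟩
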